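/- For m ∈ ℕ with m ≥ 1, the sum ∑_{j=1}^{m} 1/((2j-1)² sqrt((2m)² - (2j-1)²)) is bounded above by 1/sqrt((2m)²-1) + sqrt((2m)²-1)/(2(2m)²), which is at most (1/(2m))(2/√3 + 1/2). -/

import Mathlib

/-!
Put `M = 2m` and `f(y) = 1 / (y² √(M² - y²))`, so the sum is `∑ f(2j - 1)`. On `(0, M)` the
function `f` has the antiderivative `F(y) = -√(M² - y²) / (M² y)` and is log-convex, hence
midpoint convex; integrating `f(x + t) + f(x - t) ≥ 2 f(x)` over `t ∈ [0, 1]` gives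
`2 f(x) ≤ F(x + 1) - F(x - 1)`. Summing this over the odd `x = 3, …, 2m - 1` telescopes to
`(F(M) - F(2)) / 2 = -F(2) / 2`, the comparison with the integral of `f` over `[2, M]`; the
term `j = 1` is kept apart. The final bound is elementary since `M ≥ 2`.
-/

open Real Finset

namespace OddSumEstimate

noncomputable def integrand (M y : ℝ) : ℝ := 1 / (y ^ 2 * √(M ^ 2 - y ^ 2))

noncomputable def antideriv (M y : ℝ) : ℝ := -√(M ^ 2 - y ^ 2) / (M ^ 2 * y)

variable {M x y t h : ℝ}

lemma hasDerivAt_antideriv (hy : 0 < y) (hyM : y < M) :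
    HasDerivAt (antideriv M) (integrand M y) y := by
  have hC : 0 < M ^ 2 - y ^ 2 := by nlinarith
  have hsq : √(M ^ 2 - y ^ 2) ^ 2 = M ^ 2 - y ^ 2 := sq_sqrt hC.le
  have hM : M ≠ 0 := by linarith
  have hsqrt : HasDerivAt (fun y => √(M ^ 2 - y ^ 2)) (-y / √(M ^ 2 - y ^ 2)) y := by
    refine (((hasDerivAt_pow 2 y).const_sub (M ^ 2)).sqrt hC.ne').congr_deriv ?_
    field_simp
    ring
  refine (hsqrt.neg.div ((hasDerivAt_id' y).const_mul (M ^ 2)) (by positivity)).congr_deriv ?_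
  rw [integrand, Pi.neg_apply]
  field_simp
  linear_combination hsq

lemma continuousAt_antideriv (hM : M ≠ 0) (hy : y ≠ 0) : ContinuousAt (antideriv M) y := by
  unfold antideriv
  fun_prop (disch := positivity)

lemma sq_integrand_le_mul (ht : 0 ≤ t) (hl : 0 < x - t) (hr : x + t < M) :
    integrand M x ^ 2 ≤ integrand M (x - t) * integrand M (x + t) := by
  have hA : 0 < M ^ 2 - (x - t) ^ 2 := by nlinarith
  have hB : 0 < M ^ 2 - (x + t) ^ 2 := by nlinarith
  have hAB : (M ^ 2 - (x - t) ^ 2) * (M ^ 2 - (x + t) ^ 2) ≤ (M ^ 2 - x ^ 2) ^ 2 := by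
    nlinarith [sq_nonneg t, mul_pos hA hB]
  have hsqrt : √(M ^ 2 - (x - t) ^ 2) * √(M ^ 2 - (x + t) ^ 2) ≤ √(M ^ 2 - x ^ 2) ^ 2 := by
    rw [← sqrt_mul hA.le, sq_sqrt (by nlinarith)]
    calc _ ≤ √((M ^ 2 - x ^ 2) ^ 2) := sqrt_le_sqrt hAB
      _ = _ := sqrt_sq (by nlinarith)
  have hpoly : (x - t) ^ 2 * (x + t) ^ 2 ≤ (x ^ 2) ^ 2 := by
    rw [← mul_pow]
    exact pow_le_pow_left₀ (by nlinarith) (by nlinarith) 2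
  have hprod : (x - t) ^ 2 * √(M ^ 2 - (x - t) ^ 2) * ((x + t) ^ 2 * √(M ^ 2 - (x + t) ^ 2))
      ≤ (x ^ 2 * √(M ^ 2 - x ^ 2)) ^ 2 := by
    calc _ = ((x - t) ^ 2 * (x + t) ^ 2) *
          (√(M ^ 2 - (x - t) ^ 2) * √(M ^ 2 - (x + t) ^ 2)) := by ring
      _ ≤ (x ^ 2) ^ 2 * √(M ^ 2 - x ^ 2) ^ 2 := by gcongr
      _ = _ := by ring
  have hpos :
      0 < (x - t) ^ 2 * √(M ^ 2 - (x - t) ^ 2) * ((x + t) ^ 2 * √(M ^ 2 - (x + t) ^ 2)) := by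
    have := sqrt_pos.2 hA; have := sqrt_pos.2 hB; have : 0 < x + t := by linarith
    have := hl.ne'; positivity
  simp only [integrand, div_pow, one_pow, div_mul_div_comm, one_mul]
  exact one_div_le_one_div_of_le hpos hprod

lemma integrand_nonneg : 0 ≤ integrand M y := by
  unfold integrand
  positivity

lemma two_mul_integrand_le_add (ht : 0 ≤ t) (hl : 0 < x - t) (hr : x + t < M) :
    2 * integrand M x ≤ integrand M (x - t) + integrand M (x + t) := by
  have := sq_integrand_le_mul ht hl hr
  have ha : 0 ≤ integrand M (x - t) := integrand_nonneg
  have hb : 0 ≤ integrand M (x + t) := integrand_nonneg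
  have hc : 0 ≤ integrand M x := integrand_nonneg
  nlinarith [sq_nonneg (integrand M (x - t) - integrand M (x + t))]

lemma two_mul_mul_integrand_le_antideriv_sub (hh : 0 < h) (hl : 0 < x - h) (hr : x + h ≤ M) :
    2 * h * integrand M x ≤ antideriv M (x + h) - antideriv M (x - h) := by
  set φ : ℝ → ℝ := fun t => antideriv M (x + t) - antideriv M (x - t) - 2 * t * integrand M x
  have hφ : MonotoneOn φ (Set.Icc 0 h) := by
    refine monotoneOn_of_hasDerivWithinAt_nonneg (convex_Icc 0 h)
      (f' := fun t => integrand M (x + t) + integrand M (x - t) - 2 * integrand M x) ?_ ?_ ?_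
    · intro t ht
      have hM : M ≠ 0 := by linarith [ht.2]
      refine ContinuousAt.continuousWithinAt ?_
      refine ((continuousAt_antideriv hM ?_).comp ?_).sub ((continuousAt_antideriv hM ?_).comp ?_)
        |>.sub (by fun_prop)
      all_goals first | fun_prop | linarith [ht.1, ht.2]
    · rw [interior_Icc]
      intro t ht
      refine HasDerivAt.hasDerivWithinAt ?_
      have hp := (hasDerivAt_antideriv (M := M) (y := x + t) (by linarith [ht.1])
        (by linarith [ht.2])).comp_const_add x t
      have hm := (hasDerivAt_antideriv (M := M) (y := x - t) (by linarith [ht.2])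
        (by linarith [ht.1])).comp_const_sub x t
      refine ((hp.sub hm).sub (((hasDerivAt_id t).const_mul 2).mul_const _)).congr_deriv ?_
      ring
    · rw [interior_Icc]
      intro t ht
      have := two_mul_integrand_le_add (M := M) (x := x) ht.1.le (by linarith [ht.2])
        (by linarith [ht.2])
      linarith
  have := hφ (Set.left_mem_Icc.2 hh.le) (Set.right_mem_Icc.2 hh.le) hh.le
  simp only [φ, add_zero, sub_zero, mul_zero, zero_mul, sub_self] at this
  linarith

lemma antideriv_self : antideriv M M = 0 := by
  simp [antideriv]

lemma sum_Ioc_integrand_odd_le {k : ℕ} (hk : 1 ≤ k) (hkM : 2 * k ≤ M) :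
    ∑ j ∈ Ioc 1 k, integrand M (2 * j - 1) ≤ (antideriv M (2 * k) - antideriv M 2) / 2 := by
  induction k, hk using Nat.le_induction with
  | base => simp
  | succ k hk ih =>
    push_cast at hkM ⊢
    have hk' : (1 : ℝ) ≤ k := by exact_mod_cast hk
    have hstep : 2 * integrand M (2 * (k + 1) - 1) ≤
        antideriv M (2 * (k + 1)) - antideriv M (2 * k) := by
      have := two_mul_mul_integrand_le_antideriv_sub (M := M) (x := 2 * (k + 1) - 1) one_pos
        (by linarith) (by linarith)
      rwa [mul_one, sub_add_cancel, show (2 * (k + 1) - 1 - 1 : ℝ) = 2 * k by ring] at this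
    rw [sum_Ioc_succ_top hk, Nat.cast_succ]
    linarith [ih (by linarith)]

lemma integrand_one_add_half_antideriv_sub_le (hM : 2 ≤ M) :
    integrand M 1 + (antideriv M M - antideriv M 2) / 2 ≤
      1 / √(M ^ 2 - 1) + √(M ^ 2 - 1) / (2 * M ^ 2) := by
  have h4 : √(M ^ 2 - 2 ^ 2) ≤ √(M ^ 2 - 1) := sqrt_le_sqrt (by linarith)
  have : -antideriv M 2 / 2 ≤ √(M ^ 2 - 1) / (2 * M ^ 2) := by
    rw [antideriv, show ∀ a b : ℝ, -(-a / b) / 2 = a / (2 * b) by intros; ring,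
      div_le_div_iff₀ (by positivity) (by positivity)]
    nlinarith [sqrt_nonneg (M ^ 2 - 2 ^ 2), sq_nonneg M]
  rw [antideriv_self, integrand, one_pow, one_mul]
  linarith

lemma inv_sqrt_add_sqrt_div_le (hM : 2 ≤ M) :
    1 / √(M ^ 2 - 1) + √(M ^ 2 - 1) / (2 * M ^ 2) ≤ 1 / M * (2 / √3 + 1 / 2) := by
  have hpos : 0 < √(M ^ 2 - 1) := sqrt_pos.2 (by nlinarith)
  have hsq : √(M ^ 2 - 1) ^ 2 = M ^ 2 - 1 := sq_sqrt (by nlinarith)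
  have h3sq : √3 ^ 2 = 3 := sq_sqrt (by norm_num)
  have h1 : 1 / √(M ^ 2 - 1) ≤ 2 / (√3 * M) := by
    rw [div_le_div_iff₀ hpos (by positivity)]
    nlinarith [sq_nonneg (√3 * M - 2 * √(M ^ 2 - 1))]
  have h2 : √(M ^ 2 - 1) / (2 * M ^ 2) ≤ 1 / (2 * M) := by
    rw [div_le_div_iff₀ (by positivity) (by positivity)]
    nlinarith
  calc _ ≤ 2 / (√3 * M) + 1 / (2 * M) := add_le_add h1 h2
    _ = _ := by field_simp

end OddSumEstimate

open OddSumEstimate in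
theorem odd_sum_estimate (m : ℕ) (hm : 1 ≤ m) :
    (∑ j ∈ Finset.Icc 1 m,
        1 / ((2 * (j : ℝ) - 1) ^ 2 *
          Real.sqrt ((2 * (m : ℝ)) ^ 2 - (2 * (j : ℝ) - 1) ^ 2)) ≤
      1 / Real.sqrt ((2 * (m : ℝ)) ^ 2 - 1) +
        Real.sqrt ((2 * (m : ℝ)) ^ 2 - 1) / (2 * (2 * (m : ℝ)) ^ 2)) ∧
    1 / Real.sqrt ((2 * (m : ℝ)) ^ 2 - 1) +
        Real.sqrt ((2 * (m : ℝ)) ^ 2 - 1) / (2 * (2 * (m : ℝ)) ^ 2) ≤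
      1 / (2 * (m : ℝ)) * (2 / Real.sqrt 3 + 1 / 2) := by
  have hM : (2 : ℝ) ≤ 2 * m := by
    have : (1 : ℝ) ≤ m := by exact_mod_cast hm
    linarith
  refine ⟨?_, inv_sqrt_add_sqrt_div_le hM⟩
  calc ∑ j ∈ Icc 1 m, integrand (2 * m) (2 * j - 1)
      = integrand (2 * m) 1 + ∑ j ∈ Ioc 1 m, integrand (2 * m) (2 * j - 1) := by
        rw [Icc_eq_cons_Ioc hm, sum_cons]
        norm_num
    _ ≤ integrand (2 * m) 1 + (antideriv (2 * m) (2 * m) - antideriv (2 * m) 2) / 2 := by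
        gcongr
        exact sum_Ioc_integrand_odd_le hm le_rfl
    _ ≤ _ := integrand_one_add_half_antideriv_sub_le hM
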